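/- For any integer q ≥ 3 and any real 1/2 ≤ σ ≤ 2, one has ∑_{p ∣ q} p^{-σ} ≤ (log q)^{(2-σ)/2}, where the sum runs over primes dividing q. -/

import Mathlib

/-!
Write `p ^ (-σ) = log p * (p ^ (-σ) / log p)` and apply Hölder's inequality with weights `log p`
and exponent `2 / σ ≥ 1`. The total weight is `∑_{p ∣ q} log p ≤ log q`, and the other factor is
`(∑_{p ∣ q} p ^ (-2) (log p) ^ (-t)) ^ (σ / 2)` with `t = 2 / σ - 1 ∈ [0, 3]`. This sum is at most `1`
over any set of primes: the prime `2` contributes at most `(log 2) ^ (-3) / 4 < 0.76`, and since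
`log p ≥ 1` for `p ≥ 3` the odd primes contribute at most `1/9 + ∑_{n ≥ 5 odd} 1/n² ≤ 1/9 + 1/8`.
-/

open Finset Real ArithmeticFunction

theorem Finset.sum_le_add_sum_erase {ι M : Type*} [DecidableEq ι] [AddCommMonoid M]
    [PartialOrder M] [IsOrderedAddMonoid M] (s : Finset ι) (f : ι → M) {a : ι} (ha : 0 ≤ f a) :
    ∑ x ∈ s, f x ≤ f a + ∑ x ∈ s.erase a, f x := by
  by_cases h : a ∈ s
  · rw [add_sum_erase s f h]
  · rw [erase_eq_of_notMem h]
    exact le_add_of_nonneg_left ha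

theorem sum_inv_sub_inv_succ_le (s : Finset ℕ) {m : ℕ} (hm : 0 < m) (hs : ∀ k ∈ s, m ≤ k) :
    ∑ k ∈ s, ((k : ℝ)⁻¹ - ((k : ℝ) + 1)⁻¹) ≤ (m : ℝ)⁻¹ := by
  obtain ⟨N, hmN, hsub⟩ : ∃ N, m ≤ N ∧ s ⊆ Ico m N := ⟨max m (s.sup id + 1), le_max_left _ _,
    fun k hk => mem_Ico.2 ⟨hs k hk, lt_max_of_lt_right (Nat.lt_succ_of_le (le_sup (f := id) hk))⟩⟩
  calc ∑ k ∈ s, ((k : ℝ)⁻¹ - ((k : ℝ) + 1)⁻¹)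
      ≤ ∑ k ∈ Ico m N, ((k : ℝ)⁻¹ - ((k : ℝ) + 1)⁻¹) := by
        refine sum_le_sum_of_subset_of_nonneg hsub fun k hk _ => ?_
        have : (0 : ℝ) < k := by exact_mod_cast hm.trans_le (mem_Ico.1 hk).1
        exact sub_nonneg.2 (inv_anti₀ this (by linarith))
    _ = (m : ℝ)⁻¹ - (N : ℝ)⁻¹ := by
        have := sum_Ico_sub (fun k : ℕ => -(k : ℝ)⁻¹) hmN
        push_cast at this
        rw [show (m : ℝ)⁻¹ - (N : ℝ)⁻¹ = -(N : ℝ)⁻¹ - -(m : ℝ)⁻¹ by ring, ← this]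
        exact sum_congr rfl fun k _ => by ring
    _ ≤ (m : ℝ)⁻¹ := sub_le_self _ (by positivity)

theorem inv_sq_two_mul_add_one_le {k : ℕ} (hk : 0 < k) :
    (((2 * k + 1 : ℕ) : ℝ) ^ 2)⁻¹ ≤ 4⁻¹ * ((k : ℝ)⁻¹ - ((k : ℝ) + 1)⁻¹) := by
  have hk : (0 : ℝ) < k := by exact_mod_cast hk
  rw [show 4⁻¹ * ((k : ℝ)⁻¹ - ((k : ℝ) + 1)⁻¹) = (4 * (k : ℝ) * (k + 1))⁻¹ by field_simp; ring]
  push_cast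
  exact inv_anti₀ (by positivity) (by nlinarith)

theorem sum_inv_sq_le_of_odd (s : Finset ℕ) {m : ℕ} (hm : 0 < m)
    (hs : ∀ n ∈ s, Odd n ∧ 2 * m + 1 ≤ n) :
    ∑ n ∈ s, ((n : ℝ) ^ 2)⁻¹ ≤ (4 * m : ℝ)⁻¹ := by
  have hhalf : ∀ n ∈ s, 2 * (n / 2) + 1 = n := fun n hn => by
    obtain ⟨⟨j, rfl⟩, -⟩ := hs n hn; omega
  have hinj : Set.InjOn (· / 2) s := fun a ha b hb hab => by
    rw [← hhalf a ha, ← hhalf b hb]; simp only at hab; rw [hab]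
  calc ∑ n ∈ s, ((n : ℝ) ^ 2)⁻¹
      ≤ ∑ n ∈ s, 4⁻¹ * (((n / 2 : ℕ) : ℝ)⁻¹ - (((n / 2 : ℕ) : ℝ) + 1)⁻¹) := by
        refine sum_le_sum fun n hn => ?_
        have hk : 0 < n / 2 := by have := hs n hn; omega
        simpa only [hhalf n hn] using inv_sq_two_mul_add_one_le hk
    _ = 4⁻¹ * ∑ k ∈ s.image (· / 2), (((k : ℕ) : ℝ)⁻¹ - ((k : ℝ) + 1)⁻¹) := by
        rw [sum_image hinj, mul_sum]
    _ ≤ 4⁻¹ * (m : ℝ)⁻¹ := by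
        refine mul_le_mul_of_nonneg_left (sum_inv_sub_inv_succ_le _ hm ?_) (by norm_num)
        simp only [mem_image, forall_exists_index, and_imp]
        rintro _ n hn rfl
        have := hs n hn; omega
    _ = (4 * m : ℝ)⁻¹ := (mul_inv 4 (m : ℝ)).symm

theorem sum_inv_sq_le_of_prime_ne_two (s : Finset ℕ) (hs : ∀ p ∈ s, p.Prime ∧ p ≠ 2) :
    ∑ p ∈ s, ((p : ℝ) ^ 2)⁻¹ ≤ 9⁻¹ + 8⁻¹ := by
  calc ∑ p ∈ s, ((p : ℝ) ^ 2)⁻¹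
      ≤ (((3 : ℕ) : ℝ) ^ 2)⁻¹ + ∑ p ∈ s.erase 3, ((p : ℝ) ^ 2)⁻¹ :=
        sum_le_add_sum_erase s _ (by positivity)
    _ ≤ 9⁻¹ + (4 * (2 : ℕ) : ℝ)⁻¹ := by
        refine add_le_add (by norm_num) (sum_inv_sq_le_of_odd _ two_pos fun p hp => ?_)
        obtain ⟨hp3, hps⟩ := mem_erase.1 hp
        obtain ⟨hp, hp2⟩ := hs p hps
        exact ⟨hp.odd_of_ne_two hp2, hp.five_le_of_ne_two_of_ne_three hp2 hp3⟩
    _ = 9⁻¹ + 8⁻¹ := by norm_num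

theorem one_le_log_natCast {n : ℕ} (hn : 3 ≤ n) : 1 ≤ Real.log n := by
  rw [le_log_iff_exp_le (by positivity)]
  have : (3 : ℝ) ≤ n := by exact_mod_cast hn
  linarith [exp_one_lt_d9]

theorem two_rpow_neg_two_mul_log_two_rpow_neg_le {t : ℝ} (ht : t ≤ 3) :
    ((2 : ℕ) : ℝ) ^ (-2 : ℝ) * Real.log (2 : ℕ) ^ (-t) ≤ 4⁻¹ * (Real.log 2 ^ 3)⁻¹ := by
  have hlog2 : 0 < Real.log 2 := log_pos one_lt_two
  have hmono : Real.log 2 ^ (-t) ≤ Real.log 2 ^ (-3 : ℝ) :=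
    rpow_le_rpow_of_exponent_ge hlog2 (by linarith [log_two_lt_d9]) (by linarith)
  rw [rpow_neg hlog2.le 3, rpow_ofNat] at hmono
  rw [show ((2 : ℕ) : ℝ) ^ (-2 : ℝ) = 4⁻¹ by norm_num, Nat.cast_ofNat]
  gcongr

theorem sum_rpow_neg_two_mul_log_rpow_neg_le_one (s : Finset ℕ) (hs : ∀ p ∈ s, p.Prime)
    {t : ℝ} (ht0 : 0 ≤ t) (ht3 : t ≤ 3) :
    ∑ p ∈ s, (p : ℝ) ^ (-2 : ℝ) * Real.log p ^ (-t) ≤ 1 := by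
  have hodd : ∀ p ∈ s.erase 2, (p : ℝ) ^ (-2 : ℝ) * Real.log p ^ (-t) ≤ ((p : ℝ) ^ 2)⁻¹ := by
    intro p hp
    obtain ⟨hp2, hps⟩ := mem_erase.1 hp
    have hp3 : 3 ≤ p := (hs p hps).two_le.lt_of_ne' hp2
    rw [rpow_neg (by positivity), rpow_two]
    exact mul_le_of_le_one_right (by positivity)
      (rpow_le_one_of_one_le_of_nonpos (one_le_log_natCast hp3) (by linarith))
  have hlog2 : (0.69 : ℝ) ^ 3 ≤ Real.log 2 ^ 3 := by
    gcongr
    exact lt_trans (by norm_num) log_two_gt_d9 |>.le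
  calc ∑ p ∈ s, (p : ℝ) ^ (-2 : ℝ) * Real.log p ^ (-t)
      ≤ 4⁻¹ * (Real.log 2 ^ 3)⁻¹ + (9⁻¹ + 8⁻¹) := by
        refine (sum_le_add_sum_erase s _ (by positivity)).trans
          (add_le_add (two_rpow_neg_two_mul_log_two_rpow_neg_le ht3) ?_)
        refine (sum_le_sum hodd).trans (sum_inv_sq_le_of_prime_ne_two _ fun p hp => ?_)
        exact ⟨hs p (mem_of_mem_erase hp), ne_of_mem_erase hp⟩
    _ ≤ 4⁻¹ * ((0.69 : ℝ) ^ 3)⁻¹ + (9⁻¹ + 8⁻¹) := by gcongr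
    _ ≤ 1 := by norm_num

theorem sum_log_primeFactors_le_log (q : ℕ) :
    ∑ p ∈ q.primeFactors, Real.log p ≤ Real.log q := by
  calc ∑ p ∈ q.primeFactors, Real.log p = ∑ p ∈ q.primeFactors, Λ p :=
        sum_congr rfl fun p hp => (vonMangoldt_apply_prime (Nat.prime_of_mem_primeFactors hp)).symm
    _ ≤ ∑ d ∈ q.divisors, Λ d :=
        sum_le_sum_of_subset_of_nonneg (fun _ hp => Nat.mem_divisors.2 (Nat.mem_primeFactors.1 hp).2)
          fun _ _ _ => vonMangoldt_nonneg
    _ = Real.log q := vonMangoldt_sum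

theorem log_mul_rpow_div_log {x L σ : ℝ} (hx : 0 < x) (hL : 0 < L) (hσ : 0 < σ) :
    L * (x ^ (-σ) / L) ^ (2 / σ) = x ^ (-2 : ℝ) * L ^ (-(2 / σ - 1)) := by
  rw [div_rpow (rpow_nonneg hx.le _) hL.le, ← rpow_mul hx.le, neg_sub, rpow_sub hL, rpow_one,
    neg_mul, mul_div_cancel₀ _ hσ.ne']
  ring

theorem sum_log_mul_rpow_div_log_rpow_le_one (s : Finset ℕ) (hs : ∀ p ∈ s, p.Prime) {σ : ℝ}
    (hσ1 : 1 / 2 ≤ σ) (hσ2 : σ ≤ 2) :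
    ∑ p ∈ s, Real.log p * ((p : ℝ) ^ (-σ) / Real.log p) ^ (2 / σ) ≤ 1 := by
  have hσ : 0 < σ := by linarith
  rw [sum_congr rfl fun p hp => log_mul_rpow_div_log (by exact_mod_cast (hs p hp).pos)
    (log_pos (by exact_mod_cast (hs p hp).one_lt)) hσ]
  refine sum_rpow_neg_two_mul_log_rpow_neg_le_one s hs (sub_nonneg.2 ((one_le_div hσ).2 hσ2)) ?_
  rw [sub_le_iff_le_add, div_le_iff₀ hσ]
  linarith

theorem stmt_3_general (q : ℕ) (σ : ℝ) (hσ1 : 1 / 2 ≤ σ) (hσ2 : σ ≤ 2) :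
    ∑ p ∈ q.primeFactors, (p : ℝ) ^ (-σ) ≤ (Real.log q) ^ ((2 - σ) / 2) := by
  have hσ : 0 < σ := by linarith
  have hlog : ∀ p ∈ q.primeFactors, 0 < Real.log p := fun p hp =>
    log_pos (by exact_mod_cast (Nat.prime_of_mem_primeFactors hp).one_lt)
  have hweight : (∑ p ∈ q.primeFactors, Real.log p) ^ (1 - (2 / σ)⁻¹)
      ≤ Real.log q ^ ((2 - σ) / 2) := by
    rw [inv_div, show 1 - σ / 2 = (2 - σ) / 2 by ring]
    exact rpow_le_rpow (sum_nonneg fun p hp => (hlog p hp).le) (sum_log_primeFactors_le_log q)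
      (by linarith)
  have hprimes : (∑ p ∈ q.primeFactors,
      Real.log p * ((p : ℝ) ^ (-σ) / Real.log p) ^ (2 / σ)) ^ (2 / σ)⁻¹ ≤ 1 :=
    rpow_le_one (sum_nonneg fun p _ => mul_nonneg (log_natCast_nonneg p) (by positivity))
      (sum_log_mul_rpow_div_log_rpow_le_one _ (fun _ => Nat.prime_of_mem_primeFactors) hσ1 hσ2)
      (by positivity)
  calc ∑ p ∈ q.primeFactors, (p : ℝ) ^ (-σ)
      = ∑ p ∈ q.primeFactors, Real.log p * ((p : ℝ) ^ (-σ) / Real.log p) :=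
        sum_congr rfl fun p hp => (mul_div_cancel₀ _ (hlog p hp).ne').symm
    _ ≤ (∑ p ∈ q.primeFactors, Real.log p) ^ (1 - (2 / σ)⁻¹) * (∑ p ∈ q.primeFactors,
          Real.log p * ((p : ℝ) ^ (-σ) / Real.log p) ^ (2 / σ)) ^ (2 / σ)⁻¹ :=
        inner_le_weight_mul_Lp_of_nonneg _ ((one_le_div hσ).2 hσ2) _ _
          (fun p => log_natCast_nonneg p) fun p => div_nonneg (by positivity) (log_natCast_nonneg p)
    _ ≤ Real.log q ^ ((2 - σ) / 2) * 1 := mul_le_mul hweight hprimes (by positivity) (by positivity)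
    _ = Real.log q ^ ((2 - σ) / 2) := mul_one _

/-- For any integer `q ≥ 3` and real `1/2 ≤ σ ≤ 2`, one has
`∑_{p ∣ q} p^{-σ} ≤ (log q)^{(2-σ)/2}`. -/
theorem stmt_3 (q : ℕ) (hq : 3 ≤ q) (σ : ℝ) (hσ1 : 1 / 2 ≤ σ) (hσ2 : σ ≤ 2) :
    ∑ p ∈ q.primeFactors, (p : ℝ) ^ (-σ) ≤ (Real.log q) ^ ((2 - σ) / 2) :=
  stmt_3_general q σ hσ1 hσ2
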